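/- arXiv:1312.5686 — 2 statements merged into one kernel-verified Lean document; each statement's English description precedes it below -/
import Mathlib

section
/- For every ordinal α with 0 < α < ε₀ and every x ∈ ℕ, the Ackermann and fast-growing functions satisfy A_α(x) ≤ F_α(x) ≤ A_α(6x+5). -/
open ONote Ordinal

/-- The relativized fast-growing hierarchy `F_{h,α}`, indexed by ordinal notations `< ε₀`:
`F_{h,0} = h`, `F_{h,α+1}(x) = F_{h,α}^[x+1](x)`, and `F_{h,λ}(x) = F_{h,λ(x)}(x)` for `λ` a
limit, using the standard assignment of fundamental sequences.  The (standard) fast-growing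
hierarchy `F_α` of the paper is recovered as `FGH Nat.succ`. -/
def FGH (h : ℕ → ℕ) : ONote → ℕ → ℕ
  | o =>
    match fundamentalSequence o, fundamentalSequence_has_prop o with
    | Sum.inl none, _ => h
    | Sum.inl (some a), hp =>
      have : a < o := by rw [lt_def, hp.1]; exact Order.lt_succ _
      fun i => (FGH h a)^[i + 1] i
    | Sum.inr f, hp => fun i =>
      have : f i < o := (hp.2.1 i).2.1
      FGH h (f i) i
  termination_by o => o

/-- The Ackermann hierarchy `A_α` (meaningful for `0 < α`): `A_1(x) = 2x`,
`A_{α+1}(x) = A_α^[x](1)`, `A_λ(x) = A_{λ(x)}(x)`. -/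
def Ack : ONote → ℕ → ℕ
  | o =>
    match fundamentalSequence o, fundamentalSequence_has_prop o with
    | Sum.inl none, _ => fun _ => 0
    | Sum.inl (some a), hp =>
      have : a < o := by rw [lt_def, hp.1]; exact Order.lt_succ _
      if a = 0 then fun x => 2 * x else fun x => (Ack a)^[x] 1
    | Sum.inr f, hp => fun i =>
      have : f i < o := (hp.2.1 i).2.1
      Ack (f i) i
  termination_by o => o

/-!
Both hierarchies are compared by well-founded induction on `α` along fundamental sequences.
Limit stages are immediate once each hierarchy is monotone in its argument. Monotonicity at a
limit `λ` rests on the Bachmann property: `λ[n+1]` descends to `λ[n]` by finitely many steps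
`γ ↦ γ[n+1]` (predecessor, or `(n+1)`-th term of the fundamental sequence), and neither
hierarchy increases along such a step at the argument `n+1`. At a successor `α = β + 1` with
`β > 0`, the lower bound iterates `A_β ≤ F_β`; for the upper bound, `A_β` at least doubles,
so `F_β y ≤ A_β (6y+5) ≤ A_β^[4] y` once `y ≥ 3`, and the `x+1` iterates of `F_β` from `x`
cost at most `5x+4` iterates of `A_β` from `1`.
-/

namespace ONote

theorem eq_zero_of_fundamentalSequence_eq_none {o : ONote}
    (e : fundamentalSequence o = Sum.inl none) : o = 0 :=
  (fundamentalSequenceProp_inl_none o).1 (e ▸ fundamentalSequence_has_prop o)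

theorem fundamentalSequence_apply_ne_zero {o : ONote} {f : ℕ → ONote}
    (e : fundamentalSequence o = Sum.inr f) {i : ℕ} (hi : i ≠ 0) : f i ≠ 0 := by
  obtain ⟨k, rfl⟩ := Nat.exists_eq_succ_of_ne_zero hi
  have hlt : f k < f (k + 1) :=
    (((fundamentalSequenceProp_inr o f).1 (e ▸ fundamentalSequence_has_prop o)).2.1 k).1
  intro h
  simp [h, lt_def] at hlt

def StepDown (n : ℕ) (γ β : ONote) : Prop :=
  fundamentalSequence γ = Sum.inl (some β) ∨
    ∃ f, fundamentalSequence γ = Sum.inr f ∧ β = f n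

abbrev StepsDown (n : ℕ) : ONote → ONote → Prop :=
  Relation.ReflTransGen (StepDown n)

theorem StepDown.lt {n : ℕ} {γ β : ONote} (h : StepDown n γ β) : β < γ := by
  have hp := fundamentalSequence_has_prop γ
  rcases h with e | ⟨f, e, rfl⟩
  · rw [e] at hp
    rw [lt_def, hp.1]
    exact Order.lt_succ _
  · rw [e] at hp
    exact (hp.2.1 n).2.1

theorem stepsDown_zero (n : ℕ) (γ : ONote) : StepsDown n γ 0 := by
  rcases e : fundamentalSequence γ with ⟨_ | β⟩ | f
  · rw [eq_zero_of_fundamentalSequence_eq_none e]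
  · have h : StepDown n γ β := Or.inl e
    have := h.lt
    exact .head h (stepsDown_zero n β)
  · have h : StepDown n γ (f n) := Or.inr ⟨f, e, rfl⟩
    have := h.lt
    exact .head h (stepsDown_zero n (f n))
termination_by γ

theorem StepDown.oadd_tail {n : ℕ} {b b' : ONote} (h : StepDown n b b') (a : ONote) (m : ℕ+) :
    StepDown n (oadd a m b) (oadd a m b') := by
  rcases h with e | ⟨f, e, rfl⟩
  · exact Or.inl (by rw [fundamentalSequence, e])
  · exact Or.inr ⟨_, by rw [fundamentalSequence, e], rfl⟩

theorem StepsDown.oadd_tail {n : ℕ} {b b' : ONote} (h : StepsDown n b b') (a : ONote)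
    (m : ℕ+) :
    StepsDown n (oadd a m b) (oadd a m b') :=
  h.lift (oadd a m) fun _ _ hs => hs.oadd_tail a m

theorem stepsDown_oadd_succ (n : ℕ) (a : ONote) (k : ℕ) :
    StepsDown n (oadd a (k + 1).succPNat 0) (oadd a k.succPNat 0) := by
  rcases ea : fundamentalSequence a with ⟨_ | a'⟩ | g
  · obtain rfl := eq_zero_of_fundamentalSequence_eq_none ea
    exact .single (Or.inl (by simp [fundamentalSequence]))
  all_goals
    -- `ω^a·(k+2)` steps to some `ω^a·(k+1) + δ`, whose tail `δ` then descends to `0`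
    exact .head
      (Or.inr ⟨_, by
        simp only [fundamentalSequence, ea, Nat.natPred_succPNat, zero_def, Sum.inr.injEq]
        rfl, rfl⟩)
      ((stepsDown_zero n _).oadd_tail a _)

theorem stepsDown_oadd_of_le (n : ℕ) (a : ONote) {j k : ℕ} (h : j ≤ k) :
    StepsDown n (oadd a k.succPNat 0) (oadd a j.succPNat 0) := by
  induction k, h using Nat.le_induction with
  | base => rfl
  | succ k _ ih => exact (stepsDown_oadd_succ n a k).trans ih

theorem StepDown.omega_opow {n : ℕ} {β β' : ONote} (h : StepDown n β β') :
    StepsDown n (oadd β 1 0) (oadd β' 1 0) := by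
  rcases h with e | ⟨g, e, rfl⟩
  · exact .head (Or.inr ⟨_, by simp only [fundamentalSequence, e, zero_def]; rfl, rfl⟩)
      (stepsDown_oadd_of_le n β' (Nat.zero_le n))
  · exact .single (Or.inr ⟨_, by simp only [fundamentalSequence, e, zero_def]; rfl, rfl⟩)

theorem StepsDown.omega_opow {n : ℕ} {β β' : ONote} (h : StepsDown n β β') :
    StepsDown n (oadd β 1 0) (oadd β' 1 0) :=
  h.lift' (fun b => oadd b 1 0) fun _ _ hs => hs.omega_opow

theorem stepsDown_fundamentalSequence {γ : ONote} {f : ℕ → ONote}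
    (e : fundamentalSequence γ = Sum.inr f) {m n : ℕ} (hmn : m ≤ n) :
    StepsDown n (f n) (f m) := by
  induction γ generalizing f with
  | zero => simp [fundamentalSequence] at e
  | oadd a c b iha ihb =>
    rcases eb : fundamentalSequence b with ⟨_ | b'⟩ | g
    · obtain rfl := eq_zero_of_fundamentalSequence_eq_none eb
      obtain ⟨k, rfl⟩ : ∃ k, c = k.succPNat := ⟨c.natPred, (PNat.succPNat_natPred c).symm⟩
      rcases ea : fundamentalSequence a with ⟨_ | a'⟩ | g <;> rcases k with _ | k <;>
        simp only [fundamentalSequence, ea, Nat.natPred_succPNat, zero_def, reduceCtorEq,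
          Sum.inr.injEq] at e <;> subst e
      · exact stepsDown_oadd_of_le n a' hmn
      · exact (stepsDown_oadd_of_le n a' hmn).oadd_tail a _
      · exact (iha ea).omega_opow
      · exact (iha ea).omega_opow.oadd_tail a _
    · simp [fundamentalSequence, eb] at e
    · simp only [fundamentalSequence, eb, Sum.inr.injEq] at e
      subst e
      exact (ihb eb).oadd_tail a c

end ONote

section Iterate

variable {A F : ℕ → ℕ}

theorem two_pow_mul_le_iterate (hA : ∀ y, 2 * y ≤ A y) (k y : ℕ) : 2 ^ k * y ≤ A^[k] y := by
  induction k with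
  | zero => simp
  | succ k ih =>
    rw [Function.iterate_succ_apply', pow_succ]
    calc 2 ^ k * 2 * y = 2 * (2 ^ k * y) := by ring
    _ ≤ 2 * A^[k] y := by omega
    _ ≤ A (A^[k] y) := hA _

theorem id_le_of_two_mul_le (hA : ∀ y, 2 * y ≤ A y) : id ≤ A :=
  fun y => (Nat.le_mul_of_pos_left y two_pos).trans (hA y)

theorem apply_le_iterate_one (hA : Monotone A) (hA2 : ∀ y, 2 * y ≤ A y) (h0 : A 0 ≤ 1)
    (n : ℕ) : A n ≤ A^[n] 1 := by
  rcases n with _ | n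
  · exact h0
  · rw [Function.iterate_succ_apply']
    refine hA ((Nat.lt_two_pow_self).trans_le ?_)
    simpa using two_pow_mul_le_iterate hA2 n 1

theorem iterate_one_le_iterate_succ (hF : Monotone F) (hAF : A ≤ F) {x : ℕ} (hx : 0 < F x) :
    A^[x] 1 ≤ F^[x + 1] x :=
  calc A^[x] 1 ≤ F^[x] 1 := hF.le_iterate_of_le hAF x 1
  _ ≤ F^[x] (F x) := hF.iterate x hx
  _ = F^[x + 1] x := (Function.iterate_succ_apply F x x).symm

theorem apply_le_iterate_four (hA : Monotone A) (hA2 : ∀ y, 2 * y ≤ A y)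
    (hFA : ∀ y, F y ≤ A (6 * y + 5)) {y : ℕ} (hy : 3 ≤ y) : F y ≤ A^[4] y :=
  calc F y ≤ A (6 * y + 5) := hFA y
  _ ≤ A (A^[3] y) := hA (by have := two_pow_mul_le_iterate hA2 3 y; omega)
  _ = A^[4] y := (Function.iterate_succ_apply' A 3 y).symm

theorem iterate_le_iterate_four_mul (hA : Monotone A) (hA2 : ∀ y, 2 * y ≤ A y)
    (hFA : ∀ y, F y ≤ A (6 * y + 5)) (hF : Monotone F) (k : ℕ) {y : ℕ} (hy : 3 ≤ y) :
    F^[k] y ≤ A^[4 * k] y := by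
  induction k generalizing y with
  | zero => simp
  | succ k ih =>
    calc F^[k + 1] y = F^[k] (F y) := Function.iterate_succ_apply F k y
    _ ≤ F^[k] (A^[4] y) := hF.iterate k (apply_le_iterate_four hA hA2 hFA hy)
    _ ≤ A^[4 * k] (A^[4] y) :=
        ih (hy.trans (Function.id_le_iterate_of_id_le (id_le_of_two_mul_le hA2) 4 y))
    _ = A^[4 * (k + 1)] y := by rw [← Function.iterate_add_apply]; ring_nf

theorem iterate_succ_le_iterate_one (hA : Monotone A) (hA2 : ∀ y, 2 * y ≤ A y)
    (hFA : ∀ y, F y ≤ A (6 * y + 5)) (hF : Monotone F) (x : ℕ) :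
    F^[x + 1] x ≤ A^[6 * x + 5] 1 := by
  have hx : 6 * x + 5 ≤ A^[x + 3] 1 := by
    have h := two_pow_mul_le_iterate hA2 (x + 3) 1
    have := x.lt_two_pow_self
    rw [pow_add] at h
    omega
  have hAx : A^[x + 3] 1 ≤ A^[x + 4] 1 :=
    Function.monotone_iterate_of_id_le (id_le_of_two_mul_le hA2) (Nat.le_succ _) 1
  calc F^[x + 1] x = F^[x] (F x) := Function.iterate_succ_apply F x x
  _ ≤ F^[x] (A^[x + 4] 1) := by
      refine hF.iterate x ((hFA x).trans ?_)
      rw [Function.iterate_succ_apply']; exact hA hx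
  _ ≤ A^[4 * x] (A^[x + 4] 1) := iterate_le_iterate_four_mul hA hA2 hFA hF x (by omega)
  _ = A^[5 * x + 4] 1 := by rw [← Function.iterate_add_apply]; ring_nf
  _ ≤ A^[6 * x + 5] 1 :=
      Function.monotone_iterate_of_id_le (id_le_of_two_mul_le hA2) (by omega : 5 * x + 4 ≤ _) 1

end Iterate

theorem FGH_zero' (h : ℕ → ℕ) {o : ONote} (x : ℕ)
    (e : fundamentalSequence o = Sum.inl none) : FGH h o x = h x := by
  suffices FGH h o = h from congrFun this x
  rw [FGH]; split <;> simp_all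

theorem FGH_succ (h : ℕ → ℕ) {o a : ONote} (x : ℕ)
    (e : fundamentalSequence o = Sum.inl (some a)) : FGH h o x = (FGH h a)^[x + 1] x := by
  suffices FGH h o = fun x => (FGH h a)^[x + 1] x from congrFun this x
  rw [FGH]; split <;> simp_all

theorem FGH_limit (h : ℕ → ℕ) {o : ONote} {f : ℕ → ONote}
    (x : ℕ) (e : fundamentalSequence o = Sum.inr f) : FGH h o x = FGH h (f x) x := by
  suffices FGH h o = fun x => FGH h (f x) x from congrFun this x
  rw [FGH]; split <;> simp_all

theorem FGH_zero (h : ℕ → ℕ) : FGH h 0 = h :=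
  funext fun x => FGH_zero' h x rfl

theorem FGH_succ_of_eq_zero {o : ONote} (x : ℕ) (e : fundamentalSequence o = Sum.inl (some 0)) :
    FGH Nat.succ o x = 2 * x + 1 := by
  rw [FGH_succ _ x e, FGH_zero, Nat.succ_iterate]
  ring

section FastGrowing

variable {h : ℕ → ℕ}

theorem lt_FGH (hh : ∀ x, x < h x) (α : ONote) (x : ℕ) : x < FGH h α x := by
  rcases e : fundamentalSequence α with ⟨_ | a⟩ | f
  · rw [FGH_zero' h _ e]; exact hh x
  · have : a < α := StepDown.lt (n := 0) (Or.inl e)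
    rw [FGH_succ h _ e, Function.iterate_succ_apply]
    exact (lt_FGH hh a x).trans_le
      (Function.id_le_iterate_of_id_le (fun y => (lt_FGH hh a y).le) x _)
  · have : f x < α := StepDown.lt (Or.inr ⟨f, e, rfl⟩)
    rw [FGH_limit h _ e]
    exact lt_FGH hh (f x) x
termination_by α

theorem ONote.StepDown.FGH_le (hh : ∀ x, x < h x) {n : ℕ} {γ β : ONote}
    (hs : StepDown n γ β) : FGH h β n ≤ FGH h γ n := by
  rcases hs with e | ⟨f, e, rfl⟩
  · rw [FGH_succ h _ e, Function.iterate_succ_apply]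
    exact Function.id_le_iterate_of_id_le (fun y => (lt_FGH hh β y).le) n _
  · rw [FGH_limit h _ e]

theorem ONote.StepsDown.FGH_le (hh : ∀ x, x < h x) {n : ℕ} {γ β : ONote}
    (hs : StepsDown n γ β) : FGH h β n ≤ FGH h γ n := by
  induction hs with
  | refl => rfl
  | tail _ hs ih => exact (hs.FGH_le hh).trans ih

theorem FGH_mono (hm : Monotone h) (hh : ∀ x, x < h x) (α : ONote) : Monotone (FGH h α) := by
  refine monotone_nat_of_le_succ fun x => ?_
  rcases e : fundamentalSequence α with ⟨_ | a⟩ | f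
  · rw [FGH_zero' h _ e, FGH_zero' h _ e]; exact hm x.le_succ
  · have : a < α := StepDown.lt (n := 0) (Or.inl e)
    have ha := FGH_mono hm hh a
    rw [FGH_succ h _ e, FGH_succ h _ e]
    calc (FGH h a)^[x + 1] x ≤ (FGH h a)^[x + 1] (x + 1) := ha.iterate _ x.le_succ
    _ ≤ (FGH h a)^[x + 2] (x + 1) := by
        rw [Function.iterate_succ_apply _ (x + 1)]
        exact ha.iterate _ (lt_FGH hh a _).le
  · have : f x < α := StepDown.lt (Or.inr ⟨f, e, rfl⟩)
    rw [FGH_limit h _ e, FGH_limit h _ e]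
    calc FGH h (f x) x ≤ FGH h (f x) (x + 1) := FGH_mono hm hh (f x) x.le_succ
    _ ≤ FGH h (f (x + 1)) (x + 1) := (stepsDown_fundamentalSequence e x.le_succ).FGH_le hh
termination_by α

end FastGrowing

theorem Ack_zero' {o : ONote} (x : ℕ) (e : fundamentalSequence o = Sum.inl none) :
    Ack o x = 0 := by
  suffices Ack o = fun _ => 0 from congrFun this x
  rw [Ack]; split <;> simp_all

theorem Ack_succ {o a : ONote} (x : ℕ) (e : fundamentalSequence o = Sum.inl (some a)) :
    Ack o x = if a = 0 then 2 * x else (Ack a)^[x] 1 := by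
  suffices Ack o = if a = 0 then fun x => 2 * x else fun x => (Ack a)^[x] 1 by
    rw [this]; split_ifs <;> rfl
  rw [Ack]; split <;> simp_all

theorem Ack_limit {o : ONote} {f : ℕ → ONote} (x : ℕ)
    (e : fundamentalSequence o = Sum.inr f) : Ack o x = Ack (f x) x := by
  suffices Ack o = fun x => Ack (f x) x from congrFun this x
  rw [Ack]; split <;> simp_all

theorem Ack_zero (x : ℕ) : Ack 0 x = 0 :=
  Ack_zero' x rfl

theorem Ack_apply_zero_le_one (α : ONote) : Ack α 0 ≤ 1 := by
  rcases e : fundamentalSequence α with ⟨_ | a⟩ | f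
  · simp [Ack_zero' 0 e]
  · rw [Ack_succ 0 e]; split_ifs <;> simp
  · have : f 0 < α := StepDown.lt (Or.inr ⟨f, e, rfl⟩)
    rw [Ack_limit 0 e]
    exact Ack_apply_zero_le_one (f 0)
termination_by α

theorem two_mul_le_Ack {α : ONote} (hα : α ≠ 0) (x : ℕ) : 2 * x ≤ Ack α x := by
  rcases e : fundamentalSequence α with ⟨_ | a⟩ | f
  · exact absurd (eq_zero_of_fundamentalSequence_eq_none e) hα
  · have : a < α := StepDown.lt (n := 0) (Or.inl e)
    rw [Ack_succ x e]
    split_ifs with ha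
    · rfl
    · have h := two_pow_mul_le_iterate (two_mul_le_Ack ha) x 1
      rcases x with _ | s
      · simp
      · have := s.lt_two_pow_self
        rw [pow_succ] at h
        omega
  · rcases Nat.eq_zero_or_pos x with rfl | hx
    · simp
    · have : f x < α := StepDown.lt (Or.inr ⟨f, e, rfl⟩)
      rw [Ack_limit x e]
      exact two_mul_le_Ack (fundamentalSequence_apply_ne_zero e hx.ne') x
termination_by α

theorem ONote.StepDown.Ack_le {n : ℕ} {γ β : ONote} (hs : StepDown n γ β)
    (hmono : ∀ δ < γ, Monotone (Ack δ)) : Ack β n ≤ Ack γ n := by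
  rcases hs with e | ⟨f, e, rfl⟩
  · rw [Ack_succ n e]
    split_ifs with hβ
    · simp [hβ, Ack_zero]
    · exact apply_le_iterate_one (hmono β (StepDown.lt (n := n) (Or.inl e)))
        (two_mul_le_Ack hβ) (Ack_apply_zero_le_one β) n
  · rw [Ack_limit n e]

theorem ONote.StepsDown.Ack_le {n : ℕ} {γ β : ONote} (hs : StepsDown n γ β)
    (hmono : ∀ δ < γ, Monotone (Ack δ)) : Ack β n ≤ Ack γ n := by
  induction hs using Relation.ReflTransGen.head_induction_on with
  | refl => rfl
  | head hγ _ ih =>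
    exact (ih fun δ hδ => hmono δ (hδ.trans hγ.lt)).trans (hγ.Ack_le hmono)

theorem Ack_mono (α : ONote) : Monotone (Ack α) := by
  refine monotone_nat_of_le_succ fun x => ?_
  rcases e : fundamentalSequence α with ⟨_ | a⟩ | f
  · simp [Ack_zero' _ e]
  · rw [Ack_succ x e, Ack_succ (x + 1) e]
    split_ifs with ha
    · omega
    · exact Function.monotone_iterate_of_id_le
        (id_le_of_two_mul_le (two_mul_le_Ack ha)) x.le_succ 1
  · have : f x < α := StepDown.lt (Or.inr ⟨f, e, rfl⟩)
    have hlt : f (x + 1) < α := StepDown.lt (Or.inr ⟨f, e, rfl⟩)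
    rw [Ack_limit x e, Ack_limit (x + 1) e]
    calc Ack (f x) x ≤ Ack (f x) (x + 1) := Ack_mono (f x) x.le_succ
    _ ≤ Ack (f (x + 1)) (x + 1) :=
        (stepsDown_fundamentalSequence e x.le_succ).Ack_le fun δ hδ =>
          have : δ < α := hδ.trans hlt
          Ack_mono δ
termination_by α

theorem Ack_le_FGH (α : ONote) (x : ℕ) : Ack α x ≤ FGH Nat.succ α x := by
  rcases e : fundamentalSequence α with ⟨_ | a⟩ | f
  · simp [Ack_zero' x e]
  · obtain rfl | ha := eq_or_ne a 0
    · rw [Ack_succ x e, if_pos rfl, FGH_succ_of_eq_zero x e]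
      omega
    · have : a < α := StepDown.lt (n := 0) (Or.inl e)
      rw [Ack_succ x e, if_neg ha, FGH_succ _ x e]
      exact iterate_one_le_iterate_succ (FGH_mono (fun _ _ => Nat.succ_le_succ) Nat.lt_succ_self a)
        (Ack_le_FGH a) ((Nat.zero_le x).trans_lt (lt_FGH Nat.lt_succ_self a x))
  · have : f x < α := StepDown.lt (Or.inr ⟨f, e, rfl⟩)
    rw [Ack_limit x e, FGH_limit _ x e]
    exact Ack_le_FGH (f x) x
termination_by α

theorem FGH_le_Ack {α : ONote} (hα : α ≠ 0) (x : ℕ) :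
    FGH Nat.succ α x ≤ Ack α (6 * x + 5) := by
  rcases e : fundamentalSequence α with ⟨_ | a⟩ | f
  · exact absurd (eq_zero_of_fundamentalSequence_eq_none e) hα
  · obtain rfl | ha := eq_or_ne a 0
    · rw [Ack_succ _ e, if_pos rfl, FGH_succ_of_eq_zero x e]
      omega
    · have : a < α := StepDown.lt (n := 0) (Or.inl e)
      rw [Ack_succ _ e, if_neg ha, FGH_succ _ x e]
      exact iterate_succ_le_iterate_one (Ack_mono a) (two_mul_le_Ack ha) (FGH_le_Ack ha)
        (FGH_mono (fun _ _ => Nat.succ_le_succ) Nat.lt_succ_self a) x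
  · have : f x < α := StepDown.lt (Or.inr ⟨f, e, rfl⟩)
    have hf : f (6 * x + 5) ≠ 0 := fundamentalSequence_apply_ne_zero e (by omega)
    rw [Ack_limit _ e, FGH_limit _ x e]
    by_cases hfx : f x = 0
    · rw [hfx, FGH_zero]
      have := two_mul_le_Ack hf (6 * x + 5)
      omega
    · calc FGH Nat.succ (f x) x ≤ Ack (f x) (6 * x + 5) := FGH_le_Ack hfx x
      _ ≤ Ack (f (6 * x + 5)) (6 * x + 5) :=
          (stepsDown_fundamentalSequence e (by omega)).Ack_le fun δ _ => Ack_mono δ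
termination_by α

theorem ack_le_fastGrowing_le_ack_general (α : ONote) (hα : 0 < α) (x : ℕ) :
    Ack α x ≤ FGH Nat.succ α x ∧ FGH Nat.succ α x ≤ Ack α (6 * x + 5) :=
  ⟨Ack_le_FGH α x, FGH_le_Ack hα.ne' x⟩

/-- For every ordinal `0 < α < ε₀` and every `x ∈ ℕ`, the Ackermann and fast-growing
functions satisfy `A_α(x) ≤ F_α(x) ≤ A_α(6x+5)`. -/
theorem ack_le_fastGrowing_le_ack (α : ONote) (hNF : α.NF) (hα : 0 < α) (x : ℕ) :
    Ack α x ≤ FGH Nat.succ α x ∧ FGH Nat.succ α x ≤ Ack α (6 * x + 5) :=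
  ack_le_fastGrowing_le_ack_general α hα x
end

section
/- Let h: ℕ→ℕ be a strictly increasing function. For every ordinal α < ε₀, every c ∈ ℕ, and every x ∈ ℕ, the Hardy function at index ω^α·c equals the c-fold iterate of the relativized fast-growing function: h^{ω^α·c}(x) = F_{h,α}^c(x). -/
open ONote Ordinal

/-- The Hardy hierarchy `h^α`: `h^0(x) = x`, `h^{α+1}(x) = h^α(h(x))`,
`h^λ(x) = h^{λ(x)}(x)`. -/
def Hardy (h : ℕ → ℕ) : ONote → ℕ → ℕ
  | o =>
    match fundamentalSequence o, fundamentalSequence_has_prop o with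
    | Sum.inl none, _ => id
    | Sum.inl (some a), hp =>
      have : a < o := by rw [lt_def, hp.1]; exact Order.lt_succ _
      fun x => Hardy h a (h x)
    | Sum.inr f, hp => fun x =>
      have : f x < o := (hp.2.1 x).2.1
      Hardy h (f x) x
  termination_by o => o

/-- `ω^α · c` as an ordinal notation. -/
def omegaPowMul (α : ONote) : ℕ → ONote
  | 0 => 0
  | c + 1 => ONote.oadd α c.succPNat 0

/-!
Induction on `α`, and inside it on `c`. The fundamental sequence of `ω^α·(c+1)` at `x` is
`ω^α·c + δ_x` with `δ_x = ω^β·(x+1)` if `α = β+1` and `δ_x = ω^{α(x)}` if `α` is a limit, and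
`h^{γ + δ} = h^γ ∘ h^δ` whenever `δ` is the tail of the Cantor normal form, because fundamental
sequences of such sums only modify the tail. Hence `h^{ω^α·(c+1)}(x) = h^{ω^α·c}(h^{δ_x}(x))`, and
by the induction hypothesis `h^{δ_x}(x) = F_{h,β}^{x+1}(x)` resp. `F_{h,α(x)}(x)`, i.e. `F_{h,α}(x)`.
-/

theorem eq_zero_of_fundamentalSequence_none {o : ONote}
    (e : fundamentalSequence o = Sum.inl none) : o = 0 := by
  simpa [e, fundamentalSequenceProp_inl_none] using fundamentalSequence_has_prop o

theorem lt_of_fundamentalSequence_some {o a : ONote}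
    (e : fundamentalSequence o = Sum.inl (some a)) : a < o := by
  have ho := fundamentalSequence_has_prop o
  rw [e] at ho
  exact lt_def.2 (by rw [ho.1]; exact Order.lt_succ _)

theorem lt_of_fundamentalSequence_inr {o : ONote} {f : ℕ → ONote}
    (e : fundamentalSequence o = Sum.inr f) (i : ℕ) : f i < o := by
  have ho := fundamentalSequence_has_prop o
  rw [e] at ho
  exact (ho.2.1 i).2.1

section Unfolding

variable (h : ℕ → ℕ) {o a : ONote} {f : ℕ → ONote}

theorem hardy_zero' (e : fundamentalSequence o = Sum.inl none) (x : ℕ) :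
    Hardy h o x = x :=
  congrFun (show Hardy h o = id by rw [Hardy]; split <;> simp_all) x

theorem hardy_succ (e : fundamentalSequence o = Sum.inl (some a)) (x : ℕ) :
    Hardy h o x = Hardy h a (h x) :=
  congrFun (show Hardy h o = fun y => Hardy h a (h y) by rw [Hardy]; split <;> simp_all) x

theorem hardy_limit (e : fundamentalSequence o = Sum.inr f) (x : ℕ) :
    Hardy h o x = Hardy h (f x) x :=
  congrFun (show Hardy h o = fun y => Hardy h (f y) y by rw [Hardy]; split <;> simp_all) x

theorem hardy_zero (x : ℕ) : Hardy h 0 x = x :=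
  hardy_zero' h rfl x

theorem fgh_zero' (e : fundamentalSequence o = Sum.inl none) :
    FGH h o = h := by
  rw [FGH]; split <;> simp_all

theorem fgh_succ (e : fundamentalSequence o = Sum.inl (some a)) (x : ℕ) :
    FGH h o x = (FGH h a)^[x + 1] x :=
  congrFun (show FGH h o = fun y => (FGH h a)^[y + 1] y by rw [FGH]; split <;> simp_all) x

theorem fgh_limit (e : fundamentalSequence o = Sum.inr f) (x : ℕ) :
    FGH h o x = FGH h (f x) x :=
  congrFun (show FGH h o = fun y => FGH h (f y) y by rw [FGH]; split <;> simp_all) x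

end Unfolding

theorem fundamentalSequence_oadd_of_some {b b' : ONote}
    (e : fundamentalSequence b = Sum.inl (some b')) (a : ONote) (n : ℕ+) :
    fundamentalSequence (oadd a n b) = Sum.inl (some (oadd a n b')) := by
  rw [fundamentalSequence, e]

theorem fundamentalSequence_oadd_of_inr {b : ONote} {f : ℕ → ONote}
    (e : fundamentalSequence b = Sum.inr f) (a : ONote) (n : ℕ+) :
    fundamentalSequence (oadd a n b) = Sum.inr fun i => oadd a n (f i) := by
  rw [fundamentalSequence, e]

theorem hardy_oadd (h : ℕ → ℕ) (a : ONote) (n : ℕ+) (b : ONote) (x : ℕ) :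
    Hardy h (oadd a n b) x = Hardy h (oadd a n 0) (Hardy h b x) := by
  rcases eb : fundamentalSequence b with (_ | b') | f
  · obtain rfl := eq_zero_of_fundamentalSequence_none eb
    rw [hardy_zero]
  · have := lt_of_fundamentalSequence_some eb
    rw [hardy_succ h (fundamentalSequence_oadd_of_some eb a n),
      hardy_succ h eb, hardy_oadd h a n b']
  · have := lt_of_fundamentalSequence_inr eb x
    rw [hardy_limit h (fundamentalSequence_oadd_of_inr eb a n),
      hardy_limit h eb, hardy_oadd h a n (f x)]
termination_by b

/-- `ω^α·c + b`, the shape of the terms of the fundamental sequence of `ω^α·(c+1)`. -/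
def omegaPowMulAdd (α : ONote) : ℕ → ONote → ONote
  | 0, b => b
  | c + 1, b => oadd α c.succPNat b

theorem hardy_omegaPowMulAdd (h : ℕ → ℕ) (α : ONote) (c : ℕ) (b : ONote) (x : ℕ) :
    Hardy h (omegaPowMulAdd α c b) x = Hardy h (omegaPowMul α c) (Hardy h b x) := by
  cases c with
  | zero => rw [omegaPowMulAdd, omegaPowMul, hardy_zero]
  | succ c => exact hardy_oadd h α _ b x

theorem fundamentalSequence_omegaPowMul_zero_succ (c : ℕ) :
    fundamentalSequence (omegaPowMul 0 (c + 1)) = Sum.inl (some (omegaPowMul 0 c)) := by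
  cases c <;> rfl

theorem fundamentalSequence_omegaPowMul_succ_of_some {α β : ONote}
    (e : fundamentalSequence α = Sum.inl (some β)) (c : ℕ) :
    fundamentalSequence (omegaPowMul α (c + 1)) =
      Sum.inr fun i => omegaPowMulAdd α c (omegaPowMul β (i + 1)) := by
  cases c <;> rw [omegaPowMul, fundamentalSequence, e] <;> rfl

theorem fundamentalSequence_omegaPowMul_succ_of_inr {α : ONote} {g : ℕ → ONote}
    (e : fundamentalSequence α = Sum.inr g) (c : ℕ) :
    fundamentalSequence (omegaPowMul α (c + 1)) =
      Sum.inr fun i => omegaPowMulAdd α c (omegaPowMul (g i) 1) := by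
  cases c <;> rw [omegaPowMul, fundamentalSequence, e] <;> rfl

theorem hardy_omegaPowMul_eq_iterate_of_succ {h : ℕ → ℕ} {α : ONote}
    (hstep : ∀ c x, Hardy h (omegaPowMul α (c + 1)) x = Hardy h (omegaPowMul α c) (FGH h α x))
    (c x : ℕ) : Hardy h (omegaPowMul α c) x = (FGH h α)^[c] x := by
  induction c generalizing x with
  | zero => exact hardy_zero h x
  | succ c ih => rw [hstep, ih, Function.iterate_succ_apply]

theorem hardy_omegaPowMul_succ (h : ℕ → ℕ) {α : ONote}
    (ih : ∀ β < α, ∀ c x, Hardy h (omegaPowMul β c) x = (FGH h β)^[c] x) (c x : ℕ) :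
    Hardy h (omegaPowMul α (c + 1)) x = Hardy h (omegaPowMul α c) (FGH h α x) := by
  rcases eα : fundamentalSequence α with (_ | β) | g
  · obtain rfl := eq_zero_of_fundamentalSequence_none eα
    rw [hardy_succ h (fundamentalSequence_omegaPowMul_zero_succ c),
      fgh_zero' h eα]
  · rw [hardy_limit h (fundamentalSequence_omegaPowMul_succ_of_some eα c),
      hardy_omegaPowMulAdd, ih β (lt_of_fundamentalSequence_some eα), fgh_succ h eα]
  · rw [hardy_limit h (fundamentalSequence_omegaPowMul_succ_of_inr eα c),
      hardy_omegaPowMulAdd, ih (g x) (lt_of_fundamentalSequence_inr eα x), fgh_limit h eα,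
      Function.iterate_one]

/-- Let `h : ℕ → ℕ` be strictly increasing.  For every `α < ε₀`, every `c ∈ ℕ`, and every
`x ∈ ℕ`, the Hardy function at `ω^α·c` equals the `c`-fold iterate of the relativized
fast-growing function: `h^(ω^α·c)(x) = F_{h,α}^[c](x)`. -/
theorem hardy_omegaPowMul_eq_iterate (h : ℕ → ℕ) (α : ONote) (c x : ℕ) :
    Hardy h (omegaPowMul α c) x = (FGH h α)^[c] x :=
  hardy_omegaPowMul_eq_iterate_of_succ
    (hardy_omegaPowMul_succ h fun β _ => hardy_omegaPowMul_eq_iterate h β) c x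
termination_by α
end
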